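/- For all parameters A, B, C ∈ ℂ with B ≠ 0 and (C;q)_n ≠ 0 for all n, all y ∈ ℂ with |y| < 1, and all x ∈ ℂ with 0 < |x| < 1, one has x·(D_{q₁} f)(x) = ((1−B)/((1−q₁)B))·[Φ₁(A,q₁B;C;q,q₁;x,y) − Φ₁(A,B;C;q,q₁;x,y)], where f is the function x ↦ Φ₁(A,B;C;q,q₁;x,y) and D_{q₁} is the Jackson q₁-derivative in x. (Equation (2.19).) -/

import Mathlib

/-!
Termwise, `x * D_{q₁}` multiplies the coefficient of `x ^ l * y ^ k` by `(1 - q₁ ^ l) / (1 - q₁)`,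
while the shift `(1 - B) (q₁B; q₁)_l = (B; q₁)_l (1 - B q₁ ^ l)` turns the difference of the
coefficients at `q₁B` and at `B` into `B (1 - q₁ ^ l)` times the coefficient at `B`.
The termwise manipulations are justified by absolute convergence: the coefficients are bounded
because `(z; q)_n` converges to the infinite product `(z; q)_∞`, which is nonzero when no
`(z; q)_n` vanishes, so that `(z; q)_n⁻¹` converges as well.
-/

open Complex

/-- The q-shifted factorial (z;q)_n = prod_{r=0}^{n-1} (1 - z q^r). -/
noncomputable def qPoch (q z : ℂ) (n : ℕ) : ℂ :=
  ∏ r ∈ Finset.range n, (1 - z * q ^ r)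

/-- The bibasic Humbert hypergeometric function Φ₁ on two independent bases q and q₁. -/
noncomputable def Phi1 (q q1 A B C x y : ℂ) : ℂ :=
  ∑' p : ℕ × ℕ,
    qPoch q A (p.1 + p.2) * qPoch q1 B p.1 /
      (qPoch q C (p.1 + p.2) * qPoch q1 q1 p.1 * qPoch q q p.2) * x ^ p.1 * y ^ p.2

/-- The Jackson p-derivative. -/
noncomputable def jackson (p : ℂ) (f : ℂ → ℂ) (x : ℂ) : ℂ :=
  (f x - f (p * x)) / ((1 - p) * x)

open Filter Topology

lemma qPoch_succ (q z : ℂ) (n : ℕ) :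
    qPoch q z (n + 1) = qPoch q z n * (1 - z * q ^ n) :=
  Finset.prod_range_succ _ _

lemma qPoch_mul_shift (q B : ℂ) (n : ℕ) :
    (1 - B) * qPoch q (q * B) n = qPoch q B n * (1 - B * q ^ n) := by
  induction n with
  | zero => simp [qPoch]
  | succ n ih =>
    rw [qPoch_succ, qPoch_succ]
    linear_combination (1 - q * B * q ^ n) * ih

section Bounds

variable {q : ℂ} (hq : ‖q‖ < 1)
include hq

lemma summable_norm_mul_pow (z : ℂ) : Summable fun r : ℕ => ‖z * q ^ r‖ := by
  simpa [norm_mul, norm_pow] using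
    (summable_geometric_of_lt_one (norm_nonneg q) hq).mul_left ‖z‖

lemma tendsto_qPoch (z : ℂ) :
    Tendsto (qPoch q z) atTop (𝓝 (∏' r, (1 - z * q ^ r))) := by
  show Tendsto (fun n => ∏ r ∈ Finset.range n, (1 - z * q ^ r)) atTop _
  simpa [← sub_eq_add_neg] using (multipliable_one_add_of_summable
    (f := fun r => -(z * q ^ r)) (by simpa using summable_norm_mul_pow hq z)).tendsto_prod_tprod_nat

lemma tprod_one_sub_mul_pow_ne_zero {z : ℂ} (hz : ∀ n, qPoch q z n ≠ 0) :
    ∏' r, (1 - z * q ^ r) ≠ 0 := by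
  have hfac (r : ℕ) : 1 + -(z * q ^ r) ≠ 0 := by
    have := hz (r + 1)
    rw [qPoch_succ] at this
    simpa [← sub_eq_add_neg] using right_ne_zero_of_mul this
  simpa [← sub_eq_add_neg] using
    tprod_one_add_ne_zero_of_summable hfac (by simpa using summable_norm_mul_pow hq z)

lemma exists_norm_qPoch_le (z : ℂ) : ∃ M, ∀ n, ‖qPoch q z n‖ ≤ M := by
  obtain ⟨M, hM⟩ := isBounded_iff_forall_norm_le.mp
    (Metric.isBounded_range_of_tendsto _ (tendsto_qPoch hq z))
  exact ⟨M, fun n => hM _ ⟨n, rfl⟩⟩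

lemma exists_norm_inv_qPoch_le {z : ℂ} (hz : ∀ n, qPoch q z n ≠ 0) :
    ∃ M, ∀ n, ‖(qPoch q z n)⁻¹‖ ≤ M := by
  obtain ⟨M, hM⟩ := isBounded_iff_forall_norm_le.mp (Metric.isBounded_range_of_tendsto _
    ((tendsto_qPoch hq z).inv₀ (tprod_one_sub_mul_pow_ne_zero hq hz)))
  exact ⟨M, fun n => hM _ ⟨n, rfl⟩⟩

lemma qPoch_self_ne_zero (n : ℕ) : qPoch q q n ≠ 0 := by
  refine Finset.prod_ne_zero_iff.mpr fun r _ => sub_ne_zero.mpr fun h => ?_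
  have : ‖q ^ (r + 1)‖ < 1 := by
    rw [norm_pow]; exact pow_lt_one₀ (norm_nonneg q) hq r.succ_ne_zero
  rw [pow_succ', ← h, norm_one] at this
  exact this.false

end Bounds

lemma summable_mul_pow_mul_pow {𝕜 : Type*} [NormedField 𝕜] [CompleteSpace 𝕜]
    {c : ℕ × ℕ → 𝕜} {K : ℝ} (hc : ∀ p, ‖c p‖ ≤ K) {x y : 𝕜} (hx : ‖x‖ < 1) (hy : ‖y‖ < 1) :
    Summable fun p : ℕ × ℕ => c p * x ^ p.1 * y ^ p.2 := by
  have hgeom (z : 𝕜) (hz : ‖z‖ < 1) := summable_geometric_of_lt_one (norm_nonneg z) hz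
  refine Summable.of_norm_bounded (((hgeom x hx).mul_left K).mul_of_nonneg (hgeom y hy)
    (fun n => ?_) (fun n => by positivity)) fun p => ?_
  · exact mul_nonneg ((norm_nonneg _).trans (hc 0)) (by positivity)
  · simp only [norm_mul, norm_pow]
    gcongr
    exact hc p

noncomputable def phi1Coeff (q q1 A B C : ℂ) (p : ℕ × ℕ) : ℂ :=
  qPoch q A (p.1 + p.2) * qPoch q1 B p.1 /
    (qPoch q C (p.1 + p.2) * qPoch q1 q1 p.1 * qPoch q q p.2)

lemma phi1_eq_tsum (q q1 A B C x y : ℂ) :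
    Phi1 q q1 A B C x y = ∑' p, phi1Coeff q q1 A B C p * x ^ p.1 * y ^ p.2 := rfl

lemma exists_norm_phi1Coeff_le {q q1 C : ℂ} (hq : ‖q‖ < 1) (hq1 : ‖q1‖ < 1)
    (hC : ∀ n, qPoch q C n ≠ 0) (A B : ℂ) : ∃ K, ∀ p, ‖phi1Coeff q q1 A B C p‖ ≤ K := by
  obtain ⟨MA, hA⟩ := exists_norm_qPoch_le hq A
  obtain ⟨MB, hB⟩ := exists_norm_qPoch_le hq1 B
  obtain ⟨MC, hMC⟩ := exists_norm_inv_qPoch_le hq hC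
  obtain ⟨M1, h1⟩ := exists_norm_inv_qPoch_le hq1 (qPoch_self_ne_zero hq1)
  obtain ⟨M, hM⟩ := exists_norm_inv_qPoch_le hq (qPoch_self_ne_zero hq)
  refine ⟨MA * MB * (MC * M1 * M), fun ⟨l, k⟩ => ?_⟩
  rw [phi1Coeff, div_eq_mul_inv, mul_inv, mul_inv, norm_mul, norm_mul, norm_mul, norm_mul]
  have : 0 ≤ MA := (norm_nonneg _).trans (hA 0)
  have : 0 ≤ MB := (norm_nonneg _).trans (hB 0)
  have : 0 ≤ MC := (norm_nonneg _).trans (hMC 0)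
  have : 0 ≤ M1 := (norm_nonneg _).trans (h1 0)
  gcongr
  exacts [hA _, hB _, hMC _, h1 _, hM _]

lemma phi1Coeff_shift (q q1 A B C : ℂ) (p : ℕ × ℕ) :
    (1 - B) * (phi1Coeff q q1 A (q1 * B) C p - phi1Coeff q q1 A B C p) =
      B * (1 - q1 ^ p.1) * phi1Coeff q q1 A B C p := by
  simp only [phi1Coeff, div_eq_mul_inv]
  linear_combination qPoch q A (p.1 + p.2) *
    (qPoch q C (p.1 + p.2) * qPoch q1 q1 p.1 * qPoch q q p.2)⁻¹ * qPoch_mul_shift q1 B p.1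

lemma mul_jackson_tsum {c : ℕ × ℕ → ℂ} {p x y : ℂ} (hp : p ≠ 1) (hx : x ≠ 0)
    (h : Summable fun n : ℕ × ℕ => c n * x ^ n.1 * y ^ n.2)
    (hpx : Summable fun n : ℕ × ℕ => c n * (p * x) ^ n.1 * y ^ n.2) :
    x * jackson p (fun t => ∑' n : ℕ × ℕ, c n * t ^ n.1 * y ^ n.2) x =
      (1 - p)⁻¹ * ∑' n : ℕ × ℕ, c n * (1 - p ^ n.1) * x ^ n.1 * y ^ n.2 := by
  have h1p : 1 - p ≠ 0 := sub_ne_zero.mpr hp.symm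
  rw [jackson, ← h.tsum_sub hpx]
  field_simp
  congr 1 with n
  ring

theorem stmt15_general (q q1 A B C x y : ℂ)
    (hq1 : ‖q‖ < 1)
    (hq11 : ‖q1‖ < 1)
    (hC : ∀ n : ℕ, qPoch q C n ≠ 0)
    (hB : B ≠ 0) (hx0 : 0 < ‖x‖) (hx : ‖x‖ < 1) (hy : ‖y‖ < 1) :
    x * jackson q1 (fun t => Phi1 q q1 A B C t y) x =
      ((1 - B) / ((1 - q1) * B)) *
        (Phi1 q q1 A (q1 * B) C x y - Phi1 q q1 A B C x y) := by
  have hq1_ne : q1 ≠ 1 := fun h => by simp [h] at hq11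
  have hq1x : ‖q1 * x‖ < 1 := by
    rw [norm_mul]; nlinarith [norm_nonneg q1]
  obtain ⟨K, hK⟩ := exists_norm_phi1Coeff_le hq1 hq11 hC A B
  obtain ⟨K', hK'⟩ := exists_norm_phi1Coeff_le hq1 hq11 hC A (q1 * B)
  simp only [phi1_eq_tsum]
  rw [mul_jackson_tsum hq1_ne (norm_pos_iff.mp hx0) (summable_mul_pow_mul_pow hK hx hy)
      (summable_mul_pow_mul_pow hK hq1x hy),
    ← (summable_mul_pow_mul_pow hK' hx hy).tsum_sub (summable_mul_pow_mul_pow hK hx hy),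
    ← tsum_mul_left, ← tsum_mul_left]
  refine tsum_congr fun p => ?_
  have h1q1 : 1 - q1 ≠ 0 := sub_ne_zero.mpr hq1_ne.symm
  field_simp
  linear_combination -x ^ p.1 * y ^ p.2 * phi1Coeff_shift q q1 A B C p

theorem stmt15 (q q1 A B C x y : ℂ)
    (hq0 : 0 < ‖q‖) (hq1 : ‖q‖ < 1)
    (hq10 : 0 < ‖q1‖) (hq11 : ‖q1‖ < 1)
    (hC : ∀ n : ℕ, qPoch q C n ≠ 0)
    (hB : B ≠ 0) (hx0 : 0 < ‖x‖) (hx : ‖x‖ < 1) (hy : ‖y‖ < 1) :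
    x * jackson q1 (fun t => Phi1 q q1 A B C t y) x =
      ((1 - B) / ((1 - q1) * B)) *
        (Phi1 q q1 A (q1 * B) C x y - Phi1 q q1 A B C x y) :=
  stmt15_general q q1 A B C x y hq1 hq11 hC hB hx0 hx hy
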